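/- arXiv:2501.08877 — 2 statements merged into one kernel-verified Lean document; each statement's English description precedes it below -/
import Mathlib

section
/- Let v : ℝᵈ → ℝ be smooth with compact support and c > 0. Then the weighted Poincaré-type inequality (d/c)·∫ v(x)²·exp(‖x‖²/(2c)) dx ≤ ∫ ‖∇v(x)‖²·exp(‖x‖²/(2c)) dx holds. -/
open MeasureTheory RealInnerProductSpace

noncomputable def wgt (d : ℕ) (c : ℝ) (x : EuclideanSpace ℝ (Fin d)) : ℝ :=
  Real.exp (‖x‖ ^ 2 / (2 * c))

noncomputable def lapE (d : ℕ) (f : EuclideanSpace ℝ (Fin d) → ℝ) (x : EuclideanSpace ℝ (Fin d)) : ℝ :=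
  ∑ i, fderiv ℝ (fun y => fderiv ℝ f y (EuclideanSpace.single i 1)) x (EuclideanSpace.single i 1)

noncomputable def divE (d : ℕ) (F : EuclideanSpace ℝ (Fin d) → EuclideanSpace ℝ (Fin d)) (x : EuclideanSpace ℝ (Fin d)) : ℝ :=
  ∑ i, fderiv ℝ F x (EuclideanSpace.single i 1) i

section aux

variable {d : ℕ} {c : ℝ}

lemma integral_fderiv_comp_zero {g : EuclideanSpace ℝ (Fin d) → ℝ}
    (hg : ContDiff ℝ (⊤ : ℕ∞) g) (hgs : HasCompactSupport g) (u : EuclideanSpace ℝ (Fin d)) :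
    ∫ x, fderiv ℝ g x u = 0 := by
  have hint : Integrable (fun x => fderiv ℝ g x u) volume := by
    apply Continuous.integrable_of_hasCompactSupport
    · exact (ContinuousLinearMap.apply ℝ ℝ u).continuous.comp
        (hg.fderiv_right (m := (⊤ : ℕ∞)) (by simp)).continuous
    · exact hgs.fderiv_apply ℝ u
  have h := integral_mul_fderiv_eq_neg_fderiv_mul_of_integrable
    (μ := (volume : Measure (EuclideanSpace ℝ (Fin d))))
    (f := fun _ => (1:ℝ)) (g := g) (v := u) ?_ ?_ ?_ ?_ ?_
  · simpa using h
  · simp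
  · simpa using hint
  · simpa using hg.continuous.integrable_of_hasCompactSupport hgs
  · exact fun _ _ => differentiableAt_const _
  · exact fun y _ => hg.differentiable (by simp) y

lemma wgt_contDiff : ContDiff ℝ (⊤ : ℕ∞) (wgt d c) :=
  Real.contDiff_exp.comp ((contDiff_norm_sq ℝ).div_const _)

lemma wgt_hasFDerivAt (x : EuclideanSpace ℝ (Fin d)) :
    HasFDerivAt (wgt d c) ((wgt d c x / c) • innerSL ℝ x) x := by
  have h1 : HasFDerivAt (fun y : EuclideanSpace ℝ (Fin d) => ‖y‖ ^ 2 / (2*c))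
      ((1/c) • (innerSL ℝ x)) x := by
    have := ((hasStrictFDerivAt_norm_sq x).hasFDerivAt).const_mul (1/(2*c))
    have h2 : (fun y : EuclideanSpace ℝ (Fin d) => 1/(2*c) * ‖y‖^2)
        = fun y => ‖y‖^2/(2*c) := by ext y; ring
    rw [h2] at this
    refine this.congr_fderiv ?_
    ext y
    simp [ContinuousLinearMap.smul_apply]
    ring
  have := h1.exp
  refine this.congr_fderiv ?_
  ext y
  simp [wgt, ContinuousLinearMap.smul_apply]
  ring

lemma wgt_fderiv (x u : EuclideanSpace ℝ (Fin d)) :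
    fderiv ℝ (wgt d c) x u = (wgt d c x / c) * ⟪x, u⟫ := by
  rw [(wgt_hasFDerivAt x).fderiv]
  simp [ContinuousLinearMap.smul_apply]

lemma inner_grad (v : EuclideanSpace ℝ (Fin d) → ℝ) (x u : EuclideanSpace ℝ (Fin d)) :
    ⟪gradient v x, u⟫ = fderiv ℝ v x u := by
  rw [gradient]
  exact InnerProductSpace.toDual_symm_apply

lemma sum_single_smul (x : EuclideanSpace ℝ (Fin d)) :
    ∑ i, x i • EuclideanSpace.single i (1:ℝ) = x := by
  have := (EuclideanSpace.basisFun (Fin d) ℝ).sum_repr x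
  simpa [EuclideanSpace.basisFun_apply, EuclideanSpace.basisFun_repr] using this

lemma sum_sq_coords (x : EuclideanSpace ℝ (Fin d)) : ∑ i, x i ^ 2 = ‖x‖ ^ 2 := by
  rw [EuclideanSpace.norm_eq, Real.sq_sqrt (by positivity)]
  simp

lemma comb {f1 f2 f3 : EuclideanSpace ℝ (Fin d) → ℝ} (k1 k2 k3 : ℝ)
    (h1 : Integrable f1) (h2 : Integrable f2) (h3 : Integrable f3) :
    ∫ x, (k1 * f1 x + k2 * f2 x + k3 * f3 x)
      = k1 * (∫ x, f1 x) + k2 * (∫ x, f2 x) + k3 * (∫ x, f3 x) := by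
  have h12 : Integrable (fun x => k1 * f1 x + k2 * f2 x) := by
    exact (h1.const_mul k1).add (h2.const_mul k2)
  have h3' : Integrable (fun x => k3 * f3 x) := by exact h3.const_mul k3
  calc ∫ x, (k1 * f1 x + k2 * f2 x + k3 * f3 x)
      = (∫ x, (k1 * f1 x + k2 * f2 x)) + ∫ x, k3 * f3 x := integral_add h12 h3'
    _ = ((∫ x, k1 * f1 x) + ∫ x, k2 * f2 x) + ∫ x, k3 * f3 x := by
        rw [integral_add (by exact h1.const_mul k1) (by exact h2.const_mul k2)]
    _ = k1 * (∫ x, f1 x) + k2 * (∫ x, f2 x) + k3 * (∫ x, f3 x) := by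
        rw [integral_const_mul, integral_const_mul, integral_const_mul]

variable {v : EuclideanSpace ℝ (Fin d) → ℝ}

lemma div_pointwise (hc : c ≠ 0) (hv : ContDiff ℝ (⊤ : ℕ∞) v) (x : EuclideanSpace ℝ (Fin d)) :
    ∑ i, fderiv ℝ (fun y => y i * (v y ^ 2 * wgt d c y)) x (EuclideanSpace.single i 1)
      = d * (v x ^ 2 * wgt d c x) + 2 * (v x * ⟪x, gradient v x⟫ * wgt d c x)
        + c⁻¹ * (‖x‖ ^ 2 * (v x ^ 2 * wgt d c x)) := by
  have hvx : DifferentiableAt ℝ v x := (hv.differentiable (by simp)) x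
  have hwx : DifferentiableAt ℝ (wgt d c) x := (wgt_contDiff.differentiable (by simp)) x
  have hv2 : DifferentiableAt ℝ (fun y => v y ^ 2) x := hvx.pow 2
  have hv2w : DifferentiableAt ℝ (fun y => v y ^ 2 * wgt d c y) x := hv2.mul hwx
  have hproj : ∀ i : Fin d, DifferentiableAt ℝ (fun y : EuclideanSpace ℝ (Fin d) => y i) x :=
    fun i => (EuclideanSpace.proj (𝕜 := ℝ) i).differentiableAt
  have hfd_proj : ∀ i : Fin d, fderiv ℝ (fun y : EuclideanSpace ℝ (Fin d) => y i) x
      = EuclideanSpace.proj (𝕜 := ℝ) i := fun i =>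
    (EuclideanSpace.proj (𝕜 := ℝ) i).fderiv
  have hfd_v2 : ∀ u, fderiv ℝ (fun y => v y ^ 2) x u = 2 * v x * fderiv ℝ v x u := by
    intro u
    have : (fun y => v y ^ 2) = fun y => v y * v y := by ext y; ring
    rw [this, fderiv_fun_mul hvx hvx]
    simp
    ring
  have hfd_v2w : ∀ u, fderiv ℝ (fun y => v y ^ 2 * wgt d c y) x u
      = 2 * v x * fderiv ℝ v x u * wgt d c x + v x ^ 2 * ((wgt d c x / c) * ⟪x, u⟫) := by
    intro u
    rw [fderiv_fun_mul hv2 hwx]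
    simp [hfd_v2, wgt_fderiv]
    ring
  have hterm : ∀ i : Fin d,
      fderiv ℝ (fun y => y i * (v y ^ 2 * wgt d c y)) x (EuclideanSpace.single i 1)
      = v x ^ 2 * wgt d c x
        + x i * (2 * v x * fderiv ℝ v x (EuclideanSpace.single i 1) * wgt d c x)
        + c⁻¹ * (x i ^ 2 * (v x ^ 2 * wgt d c x)) := by
    intro i
    rw [fderiv_fun_mul (hproj i) hv2w]
    simp only [ContinuousLinearMap.add_apply, ContinuousLinearMap.smul_apply, hfd_proj,
      hfd_v2w, smul_eq_mul]
    have h1 : EuclideanSpace.proj (𝕜 := ℝ) i (EuclideanSpace.single i (1:ℝ)) = 1 := by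
      simp
    have h2 : ⟪x, EuclideanSpace.single i (1:ℝ)⟫ = x i := by
      simp [EuclideanSpace.inner_single_right]
    rw [h1, h2]
    field_simp
    ring
  rw [Finset.sum_congr rfl (fun i _ => hterm i)]
  rw [Finset.sum_add_distrib, Finset.sum_add_distrib]
  have e1 : ∑ _i : Fin d, v x ^ 2 * wgt d c x = d * (v x ^ 2 * wgt d c x) := by
    simp [Finset.sum_const, nsmul_eq_mul]
  have e2 : ∑ i : Fin d, x i * (2 * v x * fderiv ℝ v x (EuclideanSpace.single i 1) * wgt d c x)
      = 2 * (v x * ⟪x, gradient v x⟫ * wgt d c x) := by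
    have : ∑ i : Fin d, x i * fderiv ℝ v x (EuclideanSpace.single i 1) = fderiv ℝ v x x := by
      calc ∑ i : Fin d, x i * fderiv ℝ v x (EuclideanSpace.single i 1)
          = ∑ i : Fin d, fderiv ℝ v x (x i • EuclideanSpace.single i (1:ℝ)) := by
            simp [smul_eq_mul]
        _ = fderiv ℝ v x (∑ i : Fin d, x i • EuclideanSpace.single i (1:ℝ)) := by
            rw [map_sum]
        _ = fderiv ℝ v x x := by rw [sum_single_smul]
    calc ∑ i : Fin d, x i * (2 * v x * fderiv ℝ v x (EuclideanSpace.single i 1) * wgt d c x)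
        = 2 * v x * wgt d c x * ∑ i : Fin d, x i * fderiv ℝ v x (EuclideanSpace.single i 1) := by
          rw [Finset.mul_sum]; exact Finset.sum_congr rfl fun i _ => by ring
      _ = 2 * (v x * ⟪x, gradient v x⟫ * wgt d c x) := by
          rw [this, real_inner_comm, inner_grad]; ring
  have e3 : ∑ i : Fin d, c⁻¹ * (x i ^ 2 * (v x ^ 2 * wgt d c x))
      = c⁻¹ * (‖x‖ ^ 2 * (v x ^ 2 * wgt d c x)) := by
    rw [← Finset.mul_sum, ← Finset.sum_mul, sum_sq_coords]
  rw [e1, e2, e3]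

end aux

theorem stmt_12 (d : ℕ) (hd : 1 ≤ d) (c : ℝ) (hc : 0 < c)
    (v : EuclideanSpace ℝ (Fin d) → ℝ) (hv : ContDiff ℝ (⊤ : ℕ∞) v) (hvs : HasCompactSupport v) :
    (d / c) * ∫ x, (v x) ^ 2 * Real.exp (‖x‖ ^ 2 / (2 * c))
      ≤ ∫ x, ‖gradient v x‖ ^ 2 * Real.exp (‖x‖ ^ 2 / (2 * c)) := by
  show (↑d / c) * ∫ x, v x ^ 2 * wgt d c x ≤ ∫ x, ‖gradient v x‖ ^ 2 * wgt d c x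
  have hcne : c ≠ 0 := hc.ne'
  have hwc : Continuous (wgt d c) := wgt_contDiff.continuous
  have hvc : Continuous v := hv.continuous
  have hfdc : Continuous (fderiv ℝ v) := (hv.fderiv_right (m := (⊤ : ℕ∞)) (by simp)).continuous
  have hgradc : Continuous (gradient v) := by
    have h2 : Continuous fun L : EuclideanSpace ℝ (Fin d) →L[ℝ] ℝ =>
        (InnerProductSpace.toDual ℝ (EuclideanSpace ℝ (Fin d))).symm L :=
      (InnerProductSpace.toDual ℝ (EuclideanSpace ℝ (Fin d))).symm.continuous
    exact h2.comp hfdc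
  have hgrads : HasCompactSupport (gradient v) :=
    (hvs.fderiv ℝ).comp_left
      (g := fun L => (InnerProductSpace.toDual ℝ (EuclideanSpace ℝ (Fin d))).symm L)
      (map_zero _)
  have key : ∀ F : EuclideanSpace ℝ (Fin d) → ℝ, (∀ x, v x = 0 → F x = 0) →
      HasCompactSupport F := fun F h =>
    hvs.mono fun x hx h0 => hx (h x h0)
  have keyg : ∀ F : EuclideanSpace ℝ (Fin d) → ℝ, (∀ x, gradient v x = 0 → F x = 0) →
      HasCompactSupport F := fun F h =>
    hgrads.mono fun x hx h0 => hx (h x h0)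
  -- Integrability of the four basic integrands
  have hA : Integrable (fun x => v x ^ 2 * wgt d c x) := by
    apply Continuous.integrable_of_hasCompactSupport ((hvc.pow 2).mul hwc)
    exact key _ fun x hx => by simp [hx]
  have hB : Integrable (fun x => v x * ⟪x, gradient v x⟫ * wgt d c x) := by
    apply Continuous.integrable_of_hasCompactSupport
      ((hvc.mul (continuous_id.inner hgradc)).mul hwc)
    exact key _ fun x hx => by simp [hx]
  have hC : Integrable (fun x => ‖x‖ ^ 2 * (v x ^ 2 * wgt d c x)) := by
    apply Continuous.integrable_of_hasCompactSupport
      (((continuous_norm).pow 2).mul ((hvc.pow 2).mul hwc))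
    exact key _ fun x hx => by simp [hx]
  have hG : Integrable (fun x => ‖gradient v x‖ ^ 2 * wgt d c x) := by
    apply Continuous.integrable_of_hasCompactSupport ((hgradc.norm.pow 2).mul hwc)
    exact keyg _ fun x hx => by simp [hx]
  -- the divergence identity
  have hgi : ∀ i : Fin d, ContDiff ℝ (⊤ : ℕ∞) (fun y => y i * (v y ^ 2 * wgt d c y)) := fun i =>
    ((EuclideanSpace.proj (𝕜 := ℝ) i).contDiff).mul ((hv.pow 2).mul wgt_contDiff)
  have hgis : ∀ i : Fin d, HasCompactSupport (fun y => y i * (v y ^ 2 * wgt d c y)) := fun i =>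
    key _ fun x hx => by simp [hx]
  have hzero : ∫ x, ((d : ℝ) * (v x ^ 2 * wgt d c x) + 2 * (v x * ⟪x, gradient v x⟫ * wgt d c x)
      + c⁻¹ * (‖x‖ ^ 2 * (v x ^ 2 * wgt d c x))) = 0 := by
    have heq : ∀ x : EuclideanSpace ℝ (Fin d),
        ((d : ℝ) * (v x ^ 2 * wgt d c x) + 2 * (v x * ⟪x, gradient v x⟫ * wgt d c x)
          + c⁻¹ * (‖x‖ ^ 2 * (v x ^ 2 * wgt d c x)))
        = ∑ i, fderiv ℝ (fun y => y i * (v y ^ 2 * wgt d c y)) x (EuclideanSpace.single i 1) :=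
      fun x => (div_pointwise hcne hv x).symm
    rw [integral_congr_ae (Filter.Eventually.of_forall heq)]
    rw [integral_finset_sum]
    · exact Finset.sum_eq_zero fun i _ =>
        integral_fderiv_comp_zero (hgi i) (hgis i) (EuclideanSpace.single i 1)
    · intro i _
      apply Continuous.integrable_of_hasCompactSupport
      · exact (ContinuousLinearMap.apply ℝ ℝ (EuclideanSpace.single i (1:ℝ))).continuous.comp
          ((hgi i).fderiv_right (m := (⊤ : ℕ∞)) (by simp)).continuous
      · exact (hgis i).fderiv_apply ℝ _
  set A := ∫ x, v x ^ 2 * wgt d c x with hAdef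
  set B := ∫ x, v x * ⟪x, gradient v x⟫ * wgt d c x with hBdef
  set C := ∫ x, ‖x‖ ^ 2 * (v x ^ 2 * wgt d c x) with hCdef
  set G := ∫ x, ‖gradient v x‖ ^ 2 * wgt d c x with hGdef
  have hsplit : (d : ℝ) * A + 2 * B + c⁻¹ * C = 0 := by
    rw [hAdef, hBdef, hCdef, ← comb _ _ _ hA hB hC]
    exact hzero
  -- the positivity step
  have hpos : (0:ℝ) ≤ ∫ x, ‖gradient v x + (c⁻¹ * v x) • x‖ ^ 2 * wgt d c x :=
    integral_nonneg fun x => mul_nonneg (sq_nonneg _) (Real.exp_pos _).le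
  have hexp : ∀ x : EuclideanSpace ℝ (Fin d),
      ‖gradient v x + (c⁻¹ * v x) • x‖ ^ 2 * wgt d c x
      = 1 * (‖gradient v x‖ ^ 2 * wgt d c x) + (2 * c⁻¹) * (v x * ⟪x, gradient v x⟫ * wgt d c x)
        + c⁻¹ ^ 2 * (‖x‖ ^ 2 * (v x ^ 2 * wgt d c x)) := by
    intro x
    rw [norm_add_sq_real, real_inner_smul_right, norm_smul, Real.norm_eq_abs, mul_pow, sq_abs,
      real_inner_comm]
    ring
  rw [integral_congr_ae (Filter.Eventually.of_forall hexp), comb _ _ _ hG hB hC,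
    ← hBdef, ← hCdef, ← hGdef] at hpos
  -- conclude
  have h4 : c⁻¹ * ((d : ℝ) * A + 2 * B + c⁻¹ * C) = 0 := by rw [hsplit]; ring
  have hd' : (↑d / c) * A = c⁻¹ * ((d : ℝ) * A) := by ring
  rw [hd']
  nlinarith [h4, hpos]
end

section
/- Let u, v : ℝᵈ → ℝ be smooth with compact support and w(x) = exp(‖x‖²/(2c)) with c > 0. Then ∫ u(x)·(∇·(x v(x)) + c·Δv(x))·w(x) dx = −c·∫ ⟨∇(u·w)(x)·w(x)⁻¹, ∇(v·w)(x)·w(x)⁻¹⟩·w(x) dx. -/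
open MeasureTheory RealInnerProductSpace

section Aux

variable {d : ℕ}

private lemma grad_apply (f : EuclideanSpace ℝ (Fin d) → ℝ) (x : EuclideanSpace ℝ (Fin d))
    (i : Fin d) : gradient f x i = fderiv ℝ f x (EuclideanSpace.single i 1) := by
  have h1 : (gradient f x) i = ⟪EuclideanSpace.single i (1:ℝ), gradient f x⟫ := by
    rw [EuclideanSpace.inner_single_left]; simp
  rw [h1, real_inner_comm, gradient, InnerProductSpace.toDual_symm_apply]

private lemma hasFDerivAt_wgt (c : ℝ) (hc : 0 < c) (x : EuclideanSpace ℝ (Fin d)) :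
    HasFDerivAt (wgt d c) ((wgt d c x / c) • innerSL ℝ x) x := by
  have h0 : HasFDerivAt (fun y : EuclideanSpace ℝ (Fin d) => ‖y‖ ^ 2)
      (2 • (innerSL ℝ x)) x := by
    simpa using (hasFDerivAt_id x).norm_sq
  have h1 : HasFDerivAt (fun y : EuclideanSpace ℝ (Fin d) => ‖y‖ ^ 2 / (2 * c))
      ((1 / c) • innerSL ℝ x) x := by
    have h2 := h0.const_smul ((2 * c)⁻¹ : ℝ)
    have e1 : (fun y : EuclideanSpace ℝ (Fin d) => ‖y‖ ^ 2 / (2 * c))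
        = ((2 * c)⁻¹ • fun y : EuclideanSpace ℝ (Fin d) => ‖y‖ ^ 2) := by
      funext y; simp [div_eq_inv_mul]
    have e2 : (1 / c) • innerSL ℝ x = (2 * c)⁻¹ • (2 • innerSL ℝ x) := by
      ext y
      simp only [ContinuousLinearMap.coe_smul', Pi.smul_apply, smul_eq_mul, nsmul_eq_mul,
        Nat.cast_ofNat]
      field_simp
      simp only [Pi.mul_apply, Pi.ofNat_apply]; ring
    rw [e1, e2]; exact h2
  have key : (wgt d c x / c) • innerSL ℝ x
      = Real.exp (‖x‖ ^ 2 / (2 * c)) • (1 / c) • innerSL ℝ x := by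
    rw [smul_smul, wgt]; ring_nf
  rw [key]
  exact h1.exp

private lemma contDiff_wgt (c : ℝ) : ContDiff ℝ (⊤ : ℕ∞) (wgt d c) :=
  Real.contDiff_exp.comp ((contDiff_norm_sq ℝ).div_const _)

end Aux

set_option maxHeartbeats 2000000 in
theorem stmt_15 (d : ℕ) (hd : 1 ≤ d) (c : ℝ) (hc : 0 < c)
    (u v : EuclideanSpace ℝ (Fin d) → ℝ)
    (hu : ContDiff ℝ (⊤ : ℕ∞) u) (hus : HasCompactSupport u)
    (hv : ContDiff ℝ (⊤ : ℕ∞) v) (hvs : HasCompactSupport v) :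
    ∫ x, u x * ((d * v x + ⟪x, gradient v x⟫) + c * lapE d v x) * wgt d c x
      = -c * ∫ x, ⟪(wgt d c x)⁻¹ • gradient (fun z => u z * wgt d c z) x,
                   (wgt d c x)⁻¹ • gradient (fun z => v z * wgt d c z) x⟫ * wgt d c x := by
  classical
  set e : Fin d → EuclideanSpace ℝ (Fin d) := fun i => EuclideanSpace.single i (1:ℝ) with he
  set W : EuclideanSpace ℝ (Fin d) → ℝ := wgt d c with hWdef
  have hWpos : ∀ x, 0 < W x := fun x => Real.exp_pos _
  have hWne : ∀ x, W x ≠ 0 := fun x => (hWpos x).ne'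
  have hWcd : ContDiff ℝ (⊤ : ℕ∞) W := contDiff_wgt c
  have hWderiv : ∀ x : EuclideanSpace ℝ (Fin d), HasFDerivAt W ((W x / c) • innerSL ℝ x) x := hasFDerivAt_wgt c hc
  have hinnerSL : ∀ (x : EuclideanSpace ℝ (Fin d)) i, innerSL ℝ x (e i) = x i := by
    intro x i
    rw [innerSL_apply_apply, real_inner_comm]
    simp [he, EuclideanSpace.inner_single_left]
  -- the functions U = u*W and V = v*W, and their derivatives
  set U : EuclideanSpace ℝ (Fin d) → ℝ := fun y => u y * W y with hUdef
  set V : EuclideanSpace ℝ (Fin d) → ℝ := fun y => v y * W y with hVdef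
  have hUsm : ContDiff ℝ (⊤ : ℕ∞) U := hu.mul hWcd
  have hVsm : ContDiff ℝ (⊤ : ℕ∞) V := hv.mul hWcd
  have hUcs : HasCompactSupport U := hus.mul_right
  have hderiv : ∀ (f : EuclideanSpace ℝ (Fin d) → ℝ), ContDiff ℝ (⊤ : ℕ∞) f → ∀ x,
      HasFDerivAt (fun y => f y * W y)
        (W x • fderiv ℝ f x + (f x * W x / c) • innerSL ℝ x) x := by
    intro f hf x
    have h := ((hf.differentiable (by simp) x).hasFDerivAt).mul (hWderiv x)
    refine h.congr_fderiv ?_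
    ext y
    simp only [ContinuousLinearMap.add_apply, ContinuousLinearMap.coe_smul', Pi.smul_apply,
      smul_eq_mul]
    ring
  have hgrad : ∀ (f : EuclideanSpace ℝ (Fin d) → ℝ), ContDiff ℝ (⊤ : ℕ∞) f → ∀ x,
      (W x)⁻¹ • gradient (fun y => f y * W y) x = gradient f x + (f x / c) • x := by
    intro f hf x
    have h1 : fderiv ℝ (fun y => f y * W y) x
        = W x • fderiv ℝ f x + (f x * W x / c) • innerSL ℝ x := (hderiv f hf x).fderiv
    have h2 : gradient (fun y => f y * W y) x
        = W x • gradient f x + (f x * W x / c) • x := by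
      have h3 : (InnerProductSpace.toDual ℝ (EuclideanSpace ℝ (Fin d))).symm (innerSL ℝ x) = x := by
        refine ext_inner_right ℝ fun y => ?_
        rw [InnerProductSpace.toDual_symm_apply]; rfl
      rw [gradient, h1, map_add, _root_.map_smul, _root_.map_smul, h3]; rfl
    rw [h2, smul_add, smul_smul, smul_smul, inv_mul_cancel₀ (hWne x), one_smul]
    congr 2
    field_simp [hWne x, hc.ne']
  -- coordinate expressions
  set p : EuclideanSpace ℝ (Fin d) → Fin d → ℝ := fun x i => fderiv ℝ u x (e i) + x i * (u x / c) with hp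
  set q : EuclideanSpace ℝ (Fin d) → Fin d → ℝ := fun x i => fderiv ℝ v x (e i) + x i * (v x / c) with hq
  have hcomp : ∀ (f : EuclideanSpace ℝ (Fin d) → ℝ), ContDiff ℝ (⊤ : ℕ∞) f → ∀ x i,
      ((W x)⁻¹ • gradient (fun y => f y * W y) x) i = fderiv ℝ f x (e i) + x i * (f x / c) := by
    intro f hf x i
    rw [hgrad f hf x]
    simp only [PiLp.add_apply, PiLp.smul_apply, smul_eq_mul]
    rw [grad_apply]
    ring
  -- pointwise identity for the RHS integrand
  have keyRHS : ∀ x, ⟪(W x)⁻¹ • gradient U x, (W x)⁻¹ • gradient V x⟫ * W x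
      = ∑ i, p x i * q x i * W x := by
    intro x
    rw [← Finset.sum_mul]
    congr 1
    rw [PiLp.inner_apply]
    refine Finset.sum_congr rfl fun i _ => ?_
    rw [hcomp u hu x i, hcomp v hv x i]
    simp [hp, hq]; ring
  -- the vector field components
  set G : Fin d → EuclideanSpace ℝ (Fin d) → ℝ :=
    fun i y => c * fderiv ℝ v y (e i) + y i * v y with hG
  have hfdv : ContDiff ℝ (⊤ : ℕ∞) (fderiv ℝ v) := hv.fderiv_right (by simp)
  have hproj : ∀ i, ContDiff ℝ (⊤ : ℕ∞) (fun y : EuclideanSpace ℝ (Fin d) => y i) :=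
    fun i => (EuclideanSpace.proj (𝕜 := ℝ) (ι := Fin d) i).contDiff
  have hGsm : ∀ i, ContDiff ℝ (⊤ : ℕ∞) (G i) := fun i =>
    (contDiff_const.mul (hfdv.clm_apply contDiff_const)).add ((hproj i).mul hv)
  have hGcs : ∀ i, HasCompactSupport (G i) := by
    intro i
    apply HasCompactSupport.add
    · exact (hvs.fderiv_apply ℝ (e i)).mul_left
    · exact hvs.mul_left
  have hUcont : Continuous U := hUsm.continuous
  have hcontApply : ∀ (f : EuclideanSpace ℝ (Fin d) → ℝ), ContDiff ℝ (⊤ : ℕ∞) f →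
      ∀ y0, Continuous (fun x => fderiv ℝ f x y0) := by
    intro f hf y0
    have h : ContDiff ℝ (⊤ : ℕ∞) (fun x => fderiv ℝ f x y0) :=
      (hf.fderiv_right (by simp)).clm_apply contDiff_const
    exact h.continuous
  have hU'cont : ∀ i, Continuous (fun x => fderiv ℝ U x (e i)) :=
    fun i => hcontApply U hUsm (e i)
  have hGcont : ∀ i, Continuous (G i) := fun i => (hGsm i).continuous
  have hG'cont : ∀ i, Continuous (fun x => fderiv ℝ (G i) x (e i)) :=
    fun i => hcontApply (G i) (hGsm i) (e i)
  have int1 : ∀ i, Integrable (fun x => U x * fderiv ℝ (G i) x (e i)) :=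
    fun i => ((hUcont.mul (hG'cont i)).integrable_of_hasCompactSupport hUcs.mul_right)
  have int2 : ∀ i, Integrable (fun x => fderiv ℝ U x (e i) * G i x) :=
    fun i => (((hU'cont i).mul (hGcont i)).integrable_of_hasCompactSupport (hGcs i).mul_left)
  have int3 : ∀ i, Integrable (fun x => U x * G i x) :=
    fun i => ((hUcont.mul (hGcont i)).integrable_of_hasCompactSupport hUcs.mul_right)
  have ibp : ∀ i, ∫ x, U x * fderiv ℝ (G i) x (e i) = - ∫ x, fderiv ℝ U x (e i) * G i x :=
    fun i => integral_mul_fderiv_eq_neg_fderiv_mul_of_integrable (int2 i) (int1 i) (int3 i)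
      (fun x _ => hUsm.differentiable (by simp) x) (fun x _ => (hGsm i).differentiable (by simp) x)
  have hGval : ∀ i x, fderiv ℝ (G i) x (e i)
      = c * fderiv ℝ (fun y => fderiv ℝ v y (e i)) x (e i) + (v x + x i * fderiv ℝ v x (e i)) := by
    intro i x
    have h1 : HasFDerivAt (fun y => fderiv ℝ v y (e i))
        (fderiv ℝ (fun y => fderiv ℝ v y (e i)) x) x :=
      (((hfdv.clm_apply contDiff_const).differentiable (by simp)) x).hasFDerivAt
    have h2 : HasFDerivAt (fun y : EuclideanSpace ℝ (Fin d) => y i)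
        (EuclideanSpace.proj (𝕜 := ℝ) i) x := by
      have h := (EuclideanSpace.proj (𝕜 := ℝ) (ι := Fin d) i).hasFDerivAt (x := x)
      convert h using 2; rfl
    have h3 := (h1.const_mul c).add (h2.mul ((hv.differentiable (by simp) x).hasFDerivAt))
    rw [HasFDerivAt.fderiv (f := G i) h3]
    have h4 : (EuclideanSpace.proj (𝕜 := ℝ) i) (e i) = 1 := by simp [he]
    simp only [ContinuousLinearMap.add_apply, ContinuousLinearMap.coe_smul', Pi.smul_apply,
      smul_eq_mul, h4]
    ring
  have hinner : ∀ x : EuclideanSpace ℝ (Fin d),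
      ⟪x, gradient v x⟫ = ∑ i, x i * fderiv ℝ v x (e i) := by
    intro x
    rw [PiLp.inner_apply]
    refine Finset.sum_congr rfl fun i _ => ?_
    rw [grad_apply]
    simp [he, RCLike.inner_apply, conj_trivial]; ring
  have keyLHS : ∀ x, u x * ((d * v x + ⟪x, gradient v x⟫) + c * lapE d v x) * W x
      = ∑ i, U x * fderiv ℝ (G i) x (e i) := by
    intro x
    rw [← Finset.mul_sum]
    have hsum : ∑ i, fderiv ℝ (G i) x (e i)
        = (d * v x + ⟪x, gradient v x⟫) + c * lapE d v x := by
      calc ∑ i, fderiv ℝ (G i) x (e i)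
          = ∑ i, (c * fderiv ℝ (fun y => fderiv ℝ v y (e i)) x (e i)
              + (v x + x i * fderiv ℝ v x (e i))) :=
            Finset.sum_congr rfl fun i _ => hGval i x
        _ = c * (∑ i, fderiv ℝ (fun y => fderiv ℝ v y (e i)) x (e i))
              + ((∑ _i : Fin d, v x) + ∑ i, x i * fderiv ℝ v x (e i)) := by
            rw [Finset.sum_add_distrib, Finset.sum_add_distrib, Finset.mul_sum]
        _ = (d * v x + ⟪x, gradient v x⟫) + c * lapE d v x := by
            rw [hinner]
            have hl : lapE d v x = ∑ i, fderiv ℝ (fun y => fderiv ℝ v y (e i)) x (e i) := by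
              simp only [he]; rfl
            rw [hl]
            simp only [Finset.sum_const, Finset.card_univ, Fintype.card_fin, nsmul_eq_mul]
            ring
    rw [hsum]
    simp only [hUdef]
    ring
  have hU' : ∀ x i, fderiv ℝ U x (e i) = W x * fderiv ℝ u x (e i) + (u x * W x / c) * x i := by
    intro x i
    rw [(hderiv u hu x).fderiv]
    simp only [ContinuousLinearMap.add_apply, ContinuousLinearMap.coe_smul', Pi.smul_apply,
      smul_eq_mul, hinnerSL]
  have keyC : ∀ i x, fderiv ℝ U x (e i) * G i x = c * (p x i * q x i * W x) := by
    intro i x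
    rw [hU']
    simp only [hp, hq, hG]
    field_simp
  have keyRHS2 : ∀ x, ∑ i, fderiv ℝ U x (e i) * G i x
      = c * (⟪(W x)⁻¹ • gradient U x, (W x)⁻¹ • gradient V x⟫ * W x) := by
    intro x
    rw [keyRHS, Finset.mul_sum]
    exact Finset.sum_congr rfl fun i _ => keyC i x
  calc ∫ x, u x * ((d * v x + ⟪x, gradient v x⟫) + c * lapE d v x) * W x
      = ∫ x, ∑ i, U x * fderiv ℝ (G i) x (e i) := by simp_rw [keyLHS]
    _ = ∑ i, ∫ x, U x * fderiv ℝ (G i) x (e i) := integral_finset_sum _ (fun i _ => int1 i)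
    _ = ∑ i, - ∫ x, fderiv ℝ U x (e i) * G i x := Finset.sum_congr rfl fun i _ => ibp i
    _ = - ∑ i, ∫ x, fderiv ℝ U x (e i) * G i x := by rw [Finset.sum_neg_distrib]
    _ = - ∫ x, ∑ i, fderiv ℝ U x (e i) * G i x := by
        rw [integral_finset_sum _ (fun i _ => int2 i)]
    _ = - ∫ x, c * (⟪(W x)⁻¹ • gradient U x, (W x)⁻¹ • gradient V x⟫ * W x) := by
        simp_rw [keyRHS2]
    _ = -c * ∫ x, ⟪(W x)⁻¹ • gradient U x, (W x)⁻¹ • gradient V x⟫ * W x := by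
        rw [integral_const_mul]; ring
end
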